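/- arXiv:2204.04185 — 4 statements merged into one kernel-verified Lean document; each statement's English description precedes it below -/
import Mathlib

section
/- For every finite connected simple graph G, the worst-case swap routing time satisfies rt_S(G) ≥ 2/c(G) − 1, where c(G) is the vertex expansion of G. -/
/-- A swap round on `G`: a permutation that is a product of transpositions along a
matching of `G`, i.e. an involution moving every non-fixed vertex to a neighbor. -/
def IsSwapRound {V : Type*} (G : SimpleGraph V) (σ : Equiv.Perm V) : Prop :=
  σ * σ = 1 ∧ ∀ v, σ v ≠ v → G.Adj v (σ v)

/-- The swap routing time of a permutation `π` on `G`: the least number of swap rounds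
whose product is `π`. -/
noncomputable def rtS {V : Type*} (G : SimpleGraph V) (π : Equiv.Perm V) : ℕ :=
  sInf {T : ℕ | ∃ L : List (Equiv.Perm V), L.length = T ∧
    (∀ σ ∈ L, IsSwapRound G σ) ∧ L.prod = π}

/-- The worst-case swap routing time of `G`. -/
noncomputable def rtSworst {V : Type*} (G : SimpleGraph V) : ℕ :=
  ⨆ π : Equiv.Perm V, rtS G π

/-- The vertex boundary of a set `X`: vertices outside `X` adjacent to some vertex of `X`. -/
noncomputable def vtxBoundary {V : Type*} [Fintype V] (G : SimpleGraph V) (X : Finset V) :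
    Finset V :=
  @Finset.filter _ (fun v => v ∉ X ∧ ∃ u ∈ X, G.Adj u v) (Classical.decPred _) Finset.univ

/-- The vertex expansion `c(G)`: the minimum over nonempty proper subsets `X` of
`|δX| / min(|X|, |V∖X|)`. -/
noncomputable def vertexExpansion {V : Type*} [Fintype V] [DecidableEq V]
    (G : SimpleGraph V) : ℝ :=
  sInf {r : ℝ | ∃ X : Finset V, X.Nonempty ∧ X ≠ Finset.univ ∧
    r = ((vtxBoundary G X).card : ℝ) / ((min X.card Xᶜ.card : ℕ) : ℝ)}
/-!
Let `X` attain the vertex expansion, with `m = min(|X|, |V ∖ X|)` and `b = |δX|`. Some permutation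
exchanges `m` vertices of `X` with `m` vertices outside `X`. In a routing by `T` swap rounds each
of these `2m` tokens crosses between `X` and its complement, so at one of the times `0, …, T` it
sits on `δX`; at each time at most `b` tokens sit on `δX`. Hence `2m ≤ (T + 1) b`, i.e.
`T ≥ 2 / c(G) - 1`.
-/

open Finset Equiv

section

variable {V : Type*} {G : SimpleGraph V}

lemma IsSwapRound.eq_or_adj {σ : Perm V} (h : IsSwapRound G σ) (v : V) :
    σ v = v ∨ G.Adj v (σ v) :=
  or_iff_not_imp_left.2 (h.2 v)

section DecidableEq

variable [DecidableEq V]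

lemma isSwapRound_swap {a b : V} (h : G.Adj a b) : IsSwapRound G (swap a b) := by
  refine ⟨swap_mul_self a b, fun v hv => ?_⟩
  rcases (swap_apply_ne_self_iff.1 hv).2 with rfl | rfl
  · rwa [swap_apply_left]
  · rw [swap_apply_right]; exact h.symm

lemma SimpleGraph.Reachable.swap_mem_closure_isSwapRound {a b : V} (h : G.Reachable a b) :
    swap a b ∈ Submonoid.closure {σ | IsSwapRound G σ} := by
  obtain ⟨p⟩ := h
  induction p with
  | nil => rw [swap_self]; exact one_mem _
  | cons hac _ ih =>
    exact SubmonoidClass.swap_mem_trans _ (Submonoid.subset_closure (isSwapRound_swap hac)) ih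

lemma SimpleGraph.Connected.closure_isSwapRound_eq_top [Finite V] (hG : G.Connected) :
    Submonoid.closure {σ | IsSwapRound G σ} = ⊤ := by
  rw [eq_top_iff, ← Perm.mclosure_isSwap, Submonoid.closure_le]
  rintro _ ⟨a, b, -, rfl⟩
  exact (hG a b).swap_mem_closure_isSwapRound

lemma SimpleGraph.Connected.exists_length_eq_rtS [Finite V] (hG : G.Connected) (π : Perm V) :
    ∃ L : List (Perm V), L.length = rtS G π ∧ (∀ σ ∈ L, IsSwapRound G σ) ∧ L.prod = π := by
  obtain ⟨L, hL, hπ⟩ :=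
    Submonoid.exists_list_of_mem_closure (hG.closure_isSwapRound_eq_top ▸ Submonoid.mem_top π)
  exact Nat.sInf_mem (s := {T | ∃ L : List (Perm V), L.length = T ∧
    (∀ σ ∈ L, IsSwapRound G σ) ∧ L.prod = π}) ⟨_, L, rfl, hL, hπ⟩

lemma exists_perm_mapsTo_of_disjoint {A B : Finset V} (hAB : Disjoint A B) (hcard : #A = #B) :
    ∃ π : Perm V, Set.MapsTo π A B ∧ Set.MapsTo π B A := by
  obtain ⟨e⟩ : Nonempty (A ≃ B) := ⟨Finset.equivOfCardEq hcard⟩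
  let U := Equiv.Finset.union A B hAB
  let π : Perm V :=
    Perm.ofSubtype (U.symm.trans ((sumComm A B).trans ((sumCongr e.symm e).trans U)))
  refine ⟨π, fun u (hu : u ∈ A) => ?_, fun u (hu : u ∈ B) => ?_⟩
  · simp [π, U, Perm.ofSubtype_apply_of_mem _ (mem_union_left B hu), hu]
  · simp [π, U, Perm.ofSubtype_apply_of_mem _ (mem_union_right A hu), hu]

end DecidableEq

lemma rtS_le_rtSworst [Finite V] (π : Perm V) : rtS G π ≤ rtSworst G :=
  le_ciSup (Set.finite_range _).bddAbove π

variable [Fintype V]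

lemma mem_vtxBoundary {X : Finset V} {v : V} :
    v ∈ vtxBoundary G X ↔ v ∉ X ∧ ∃ u ∈ X, G.Adj u v := by
  simp [vtxBoundary]

lemma exists_mem_vtxBoundary_of_not_iff {X : Finset V} {p : ℕ → V} {T : ℕ}
    (hp : ∀ t < T, p (t + 1) = p t ∨ G.Adj (p t) (p (t + 1))) (hX : ¬(p 0 ∈ X ↔ p T ∈ X)) :
    ∃ t ≤ T, p t ∈ vtxBoundary G X := by
  induction T with
  | zero => exact absurd Iff.rfl hX
  | succ T ih =>
    by_cases h0 : p 0 ∈ X ↔ p T ∈ X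
    · have hlast : ¬(p T ∈ X ↔ p (T + 1) ∈ X) := fun h => hX (h0.trans h)
      rcases hp T T.lt_succ_self with heq | hadj
      · exact absurd (heq ▸ Iff.rfl) hlast
      by_cases hT : p T ∈ X
      · exact ⟨T + 1, le_rfl, mem_vtxBoundary.2 ⟨by tauto, p T, hT, hadj⟩⟩
      · exact ⟨T, T.le_succ, mem_vtxBoundary.2 ⟨hT, p (T + 1), by tauto, hadj.symm⟩⟩
    · obtain ⟨t, ht, hmem⟩ := ih (fun t ht => hp t (by omega)) h0
      exact ⟨t, by omega, hmem⟩

lemma card_le_succ_length_mul_card_vtxBoundary [DecidableEq V] (X : Finset V)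
    {L : List (Perm V)} (hL : ∀ σ ∈ L, IsSwapRound G σ) {S : Finset V}
    (hS : ∀ u ∈ S, ¬(u ∈ X ↔ L.prod u ∈ X)) :
    #S ≤ (L.length + 1) * #(vtxBoundary G X) := by
  -- `L.prod` applies the rounds right to left, so token `u` sits at `(L.drop t).prod u` after
  -- the first `L.length - t` rounds
  have hcover : S ⊆ (range (L.length + 1)).biUnion
      fun t => (vtxBoundary G X).map (L.drop t).prod.symm.toEmbedding := by
    intro u hu
    have hstep : ∀ t < L.length, (L.drop (t + 1)).prod u = (L.drop t).prod u ∨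
        G.Adj ((L.drop t).prod u) ((L.drop (t + 1)).prod u) := by
      intro t ht
      rw [List.drop_eq_getElem_cons ht, List.prod_cons, Perm.mul_apply]
      exact ((hL _ (L.getElem_mem ht)).eq_or_adj _).imp Eq.symm SimpleGraph.Adj.symm
    obtain ⟨t, ht, hmem⟩ := exists_mem_vtxBoundary_of_not_iff (p := fun t => (L.drop t).prod u)
      hstep (by simpa [Iff.comm] using hS u hu)
    exact mem_biUnion.2 ⟨t, mem_range.2 (by omega), by simpa [mem_map_equiv] using hmem⟩
  calc #S ≤ _ := card_le_card hcover
    _ ≤ _ := card_biUnion_le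
    _ = _ := by simp

variable [DecidableEq V]

lemma two_mul_min_card_le_rtSworst_succ_mul (hG : G.Connected) (X : Finset V) :
    2 * min #X #Xᶜ ≤ (rtSworst G + 1) * #(vtxBoundary G X) := by
  obtain ⟨A, hAX, hA⟩ := exists_subset_card_eq (min_le_left #X #Xᶜ)
  obtain ⟨B, hBX, hB⟩ := exists_subset_card_eq (min_le_right #X #Xᶜ)
  have hAB : Disjoint A B :=
    disjoint_of_subset_left hAX (disjoint_of_subset_right hBX disjoint_compl_right)
  obtain ⟨π, hπA, hπB⟩ := exists_perm_mapsTo_of_disjoint hAB (hA.trans hB.symm)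
  obtain ⟨L, hLπ, hL, rfl⟩ := hG.exists_length_eq_rtS π
  have hcross : ∀ u ∈ A ∪ B, ¬(u ∈ X ↔ L.prod u ∈ X) := by
    intro u hu
    rcases mem_union.1 hu with hu | hu
    · simpa [hAX hu] using mem_compl.1 (hBX (hπA hu))
    · simpa [mem_compl.1 (hBX hu)] using hAX (hπB hu)
  calc 2 * min #X #Xᶜ = #(A ∪ B) := by rw [card_union_of_disjoint hAB, hA, hB, two_mul]
    _ ≤ (L.length + 1) * #(vtxBoundary G X) :=
      card_le_succ_length_mul_card_vtxBoundary X hL hcross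
    _ ≤ (rtSworst G + 1) * #(vtxBoundary G X) := by
      gcongr
      exact hLπ ▸ rtS_le_rtSworst _

lemma exists_vertexExpansion_eq (G : SimpleGraph V) : ∃ X : Finset V,
    vertexExpansion G = (#(vtxBoundary G X) : ℝ) / ((min #X #Xᶜ : ℕ) : ℝ) := by
  set R := {r : ℝ | ∃ X : Finset V, X.Nonempty ∧ X ≠ Finset.univ ∧
    r = ((vtxBoundary G X).card : ℝ) / ((min X.card Xᶜ.card : ℕ) : ℝ)}
  rcases R.eq_empty_or_nonempty with hR | hR
  · -- both sides are junk zeros: `sInf ∅ = 0` and `0 / 0 = 0`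
    refine ⟨∅, ?_⟩
    change sInf R = _
    simp [hR]
  · have hfin : R.Finite := (Set.finite_range fun X : Finset V =>
      ((vtxBoundary G X).card : ℝ) / ((min X.card Xᶜ.card : ℕ) : ℝ)).subset
        fun r ⟨X, _, _, hr⟩ => ⟨X, hr.symm⟩
    obtain ⟨X, -, -, hX⟩ := hR.csInf_mem hfin
    exact ⟨X, hX⟩

end

/-- Isoperimetric lower bound: for every finite connected simple graph `G`,
`rt_S(G) ≥ 2 / c(G) − 1`. -/
theorem swap_routing_time_ge_expansion {V : Type*} [Fintype V] [DecidableEq V]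
    (G : SimpleGraph V) (hG : G.Connected) :
    2 / vertexExpansion G - 1 ≤ (rtSworst G : ℝ) := by
  obtain ⟨X, hX⟩ := exists_vertexExpansion_eq G
  have hcount := two_mul_min_card_le_rtSworst_succ_mul hG X
  rw [hX, div_div_eq_mul_div, sub_le_iff_le_add]
  exact div_le_of_le_mul₀ (by positivity) (by positivity) (by exact_mod_cast hcount)
end

section
/- Let n ≥ 1 and let L(n) be the graph on vertex set {1, 2, …, 2^n − 1} in which distinct vertices u, v are adjacent if and only if |⌊log₂ u⌋ − ⌊log₂ v⌋| ≤ 1. For u ∈ V(L(n)) with ℓ(u) = ⌊log₂ u⌋, define r(u,0) = u and r(u,i) = 2^{ℓ(u)+i} + u for i ≥ 1. For u < v at graph distance d, define the canonical path P(u,v) = P(v,u) to be the vertex sequence (u, r(u,1), …, r(u,d−1), v). Then for every permutation π of {1, …, 2^n − 1}, each vertex of L(n) lies on at most 4 of the canonical paths in the collection {P(u, π(u)) : u with π(u) ≠ u}. -/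
/-- The vertex set of `L(n)`: the integers `1, …, 2^n − 1`. -/
abbrev LnVert (n : ℕ) := {u : ℕ // u ∈ Finset.Icc 1 (2 ^ n - 1)}

/-- The layer of a vertex `u` is `⌊log₂ u⌋`. -/
def layer (u : ℕ) : ℕ := Nat.log 2 u

/-- The graph `L(n)`: distinct vertices `u, v ∈ {1, …, 2^n − 1}` are adjacent
iff their layers differ by at most 1. -/
def LnGraph (n : ℕ) : SimpleGraph (LnVert n) where
  Adj u v := u ≠ v ∧ ((layer u.val : ℤ) - (layer v.val : ℤ)).natAbs ≤ 1
  symm := by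
    constructor; intro u v h
    exact ⟨h.1.symm, by have := h.2; omega⟩
  loopless := by
    constructor; intro u h
    exact h.1 rfl

/-- `r(u,0) = u` and `r(u,i) = 2^{ℓ(u)+i} + u` for `i ≥ 1`. -/
def rVert (u : ℕ) : ℕ → ℕ
  | 0 => u
  | i + 1 => 2 ^ (layer u + (i + 1)) + u

/-- The vertex sequence of the canonical path between `u < v` at graph distance `d`:
`(u, r(u,1), …, r(u,d−1), v)`. -/
def canonicalPath (u v d : ℕ) : List ℕ :=
  [u] ++ (List.range (d - 1)).map (fun i => rVert u (i + 1)) ++ [v]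

/-!
An interior vertex of `P(a, b)` has the form `w = 2^{ℓ(a)+i} + a` with `i ≥ 1`; since `a < 2^{ℓ(a)+1}`,
`w` lies in layer `ℓ(a) + i`, so `a = w − 2^{ℓ(w)}` is determined by `w`. Hence if `w` lies on
`P(u, π u)`, then `u` or `π u` belongs to `{w, w − 2^{ℓ(w)}}`, and as `u ↦ u` and `u ↦ π u` are
injective, at most `2 + 2` vertices `u` qualify.
-/

lemma layer_rVert_succ (u i : ℕ) : layer (rVert u (i + 1)) = layer u + (i + 1) := by
  have hu : u < 2 ^ (layer u + (i + 1)) :=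
    (Nat.lt_pow_succ_log_self (by norm_num) u).trans_le
      (Nat.pow_le_pow_right (by norm_num) (by unfold layer; omega))
  refine Nat.log_eq_of_pow_le_of_lt_pow (Nat.le_add_right _ _) ?_
  rw [pow_succ, rVert]
  omega

lemma rVert_succ_sub_pow_layer (u i : ℕ) : rVert u (i + 1) - 2 ^ layer (rVert u (i + 1)) = u := by
  rw [layer_rVert_succ, rVert, Nat.add_sub_cancel_left]

lemma eq_or_eq_or_eq_sub_of_mem_canonicalPath {w u v d : ℕ} (h : w ∈ canonicalPath u v d) :
    w = u ∨ w = v ∨ u = w - 2 ^ layer w := by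
  simp only [canonicalPath, List.mem_append, List.mem_singleton, List.mem_map,
    List.mem_range] at h
  rcases h with (rfl | ⟨i, -, rfl⟩) | rfl
  · exact Or.inl rfl
  · exact Or.inr (Or.inr (rVert_succ_sub_pow_layer u i).symm)
  · exact Or.inr (Or.inl rfl)

lemma card_filter_apply_mem_le {α β : Type*} [Fintype α] [DecidableEq β] {f : α → β}
    (hf : Function.Injective f) (T : Finset β) :
    (Finset.univ.filter fun a => f a ∈ T).card ≤ T.card :=
  Finset.card_le_card_of_injOn f (fun _ ha => (Finset.mem_filter.mp ha).2) hf.injOn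

theorem canonicalPaths_low_congestion_general (n : ℕ)
    (π : Equiv.Perm (LnVert n)) (w : LnVert n) :
    (Finset.univ.filter fun u : LnVert n => π u ≠ u ∧
        (w : ℕ) ∈ canonicalPath (min (u : ℕ) (π u : ℕ)) (max (u : ℕ) (π u : ℕ))
          ((LnGraph n).dist u (π u))).card ≤ 4 := by
  set T : Finset ℕ := {(w : ℕ), (w : ℕ) - 2 ^ layer (w : ℕ)}
  have hsub : (Finset.univ.filter fun u : LnVert n => π u ≠ u ∧
        (w : ℕ) ∈ canonicalPath (min (u : ℕ) (π u : ℕ)) (max (u : ℕ) (π u : ℕ))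
          ((LnGraph n).dist u (π u))) ⊆
      (Finset.univ.filter fun u : LnVert n => (u : ℕ) ∈ T) ∪
        Finset.univ.filter fun u : LnVert n => (π u : ℕ) ∈ T := by
    intro u hu
    have hw := eq_or_eq_or_eq_sub_of_mem_canonicalPath (Finset.mem_filter.mp hu).2.2
    simp only [T, Finset.mem_union, Finset.mem_filter, Finset.mem_univ, true_and,
      Finset.mem_insert, Finset.mem_singleton]
    omega
  calc _ ≤ _ := Finset.card_le_card hsub
    _ ≤ _ := Finset.card_union_le _ _
    _ ≤ T.card + T.card := add_le_add (card_filter_apply_mem_le Subtype.val_injective T)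
        (card_filter_apply_mem_le (Subtype.val_injective.comp π.injective) T)
    _ ≤ 4 := by grw [Finset.card_le_two]

/-- For every permutation `π` of the vertices of `L(n)`, every vertex lies on at most 4
of the canonical paths `P(u, π(u))` taken over the non-fixed points `u` of `π`. -/
theorem canonicalPaths_low_congestion (n : ℕ) (hn : 1 ≤ n)
    (π : Equiv.Perm (LnVert n)) (w : LnVert n) :
    (Finset.univ.filter fun u : LnVert n => π u ≠ u ∧
        (w : ℕ) ∈ canonicalPath (min (u : ℕ) (π u : ℕ)) (max (u : ℕ) (π u : ℕ))
          ((LnGraph n).dist u (π u))).card ≤ 4 :=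
  canonicalPaths_low_congestion_general n π w
end

section
/- Let G be a finite connected simple graph on N ≥ 2 vertices and, for each vertex w, let the horizon ρ(w) be the largest nonnegative integer k such that the ball D(w,k) = {u : d(u,w) ≤ k} satisfies |D(w,k)| ≤ N/2. Then for all vertices u, v, the distance satisfies d(u,v) ≤ ρ(u) + ρ(v) + 2. -/
/-!
The ball of radius `ρ(w) + 1` around `w` holds more than half of the vertices, by maximality
of the horizon. So the balls of radii `ρ(u) + 1` and `ρ(v) + 1` meet, and the triangle inequality
through a common vertex gives the bound.
-/

/-- The ball `D(v,k)` of radius `k` around `v`: all vertices at distance at most `k`. -/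
noncomputable def distBall {V : Type*} [Fintype V] (G : SimpleGraph V) (v : V) (k : ℕ) :
    Finset V :=
  @Finset.filter _ (fun u => G.dist v u ≤ k) (Classical.decPred _) Finset.univ

/-- The horizon `ρ(w)`: the largest `k` such that `|D(w,k)| ≤ N/2`. -/
noncomputable def horizon {V : Type*} [Fintype V] (G : SimpleGraph V) (w : V) : ℕ :=
  sSup {k : ℕ | 2 * (distBall G w k).card ≤ Fintype.card V}

namespace SimpleGraph

variable {V : Type*} [Fintype V] {G : SimpleGraph V}

lemma mem_distBall {v u : V} {k : ℕ} : u ∈ distBall G v k ↔ G.dist v u ≤ k := by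
  simp [distBall]

lemma Connected.distBall_eq_univ (hG : G.Connected) (v : V) {k : ℕ} (hk : G.diam ≤ k) :
    distBall G v k = Finset.univ := by
  have : Nonempty V := hG.nonempty
  have hdiam : G.ediam ≠ ⊤ := G.connected_iff_ediam_ne_top.mp hG
  exact Finset.eq_univ_of_forall fun u => mem_distBall.mpr ((dist_le_diam hdiam).trans hk)

/-- Needed because `sSup` of an unbounded set of naturals is the junk value `0`. -/
lemma Connected.bddAbove_setOf_two_mul_card_distBall_le (hG : G.Connected) (w : V) :
    BddAbove {k : ℕ | 2 * (distBall G w k).card ≤ Fintype.card V} := by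
  refine ⟨G.diam, fun k hk => ?_⟩
  by_contra! hlt
  have : Nonempty V := hG.nonempty
  have hpos : 0 < Fintype.card V := Fintype.card_pos
  rw [Set.mem_ofPred_eq, hG.distBall_eq_univ w hlt.le, Finset.card_univ] at hk
  omega

lemma Connected.lt_two_mul_card_distBall_horizon_succ (hG : G.Connected) (w : V) :
    Fintype.card V < 2 * (distBall G w (horizon G w + 1)).card := by
  by_contra! h
  exact (horizon G w).lt_succ_self.not_ge
    (le_csSup (hG.bddAbove_setOf_two_mul_card_distBall_le w) h)

end SimpleGraph

open SimpleGraph in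
theorem dist_le_horizon_add_general {V : Type*} [Fintype V] (G : SimpleGraph V)
    (hG : G.Connected) (u v : V) :
    G.dist u v ≤ horizon G u + horizon G v + 2 := by
  classical
  have hu := hG.lt_two_mul_card_distBall_horizon_succ u
  have hv := hG.lt_two_mul_card_distBall_horizon_succ v
  obtain ⟨w, hw⟩ := Finset.inter_nonempty_of_card_lt_card_add_card
    (Finset.subset_univ (distBall G u (horizon G u + 1)))
    (Finset.subset_univ (distBall G v (horizon G v + 1)))
    (by rw [Finset.card_univ]; omega)
  rw [Finset.mem_inter, mem_distBall, mem_distBall] at hw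
  calc G.dist u v ≤ G.dist u w + G.dist w v := hG.dist_triangle
    _ ≤ horizon G u + horizon G v + 2 := by rw [G.dist_comm (u := w)]; omega

/-- For a finite connected simple graph on `N ≥ 2` vertices, any two vertices are at
distance at most `ρ(u) + ρ(v) + 2`, where `ρ` is the horizon. -/
theorem dist_le_horizon_add {V : Type*} [Fintype V] (G : SimpleGraph V)
    (hG : G.Connected) (hN : 2 ≤ Fintype.card V) (u v : V) :
    G.dist u v ≤ horizon G u + horizon G v + 2 :=
  dist_le_horizon_add_general G hG u v
end

section
/- For any finite connected simple graphs G₁ and G₂, the worst-case swap routing time of the Cartesian (box) product satisfies rt_S(G₁ □ G₂) ≤ 2·rt_S(G₁) + rt_S(G₂). -/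
/-!
Route in three phases, as in a Clos network. For a permutation `π` of `V₁ × V₂`, join `b` to
`b'` once for each vertex `x ∈ V₁ × {b}` with `π x ∈ V₁ × {b'}`: this bipartite multigraph is
`|V₁|`-regular, so by König's theorem its edges can be coloured by `V₁` with every colour class a
perfect matching. Hence `π` is a permutation inside each copy `V₁ × {b}` of `G₁` (moving every
vertex to the row of its colour), followed by one inside each copy `{a} × V₂` of `G₂`, followed by
one inside each copy of `G₁`. The copies in a phase are disjoint, so they are routed in parallel,
in `rt_S(G₁)`, `rt_S(G₂)` and `rt_S(G₁)` rounds.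
-/

open Equiv Function Finset
open scoped Pointwise

lemma Set.mem_pow_iff_exists_list {M : Type*} [Monoid M] {s : Set M} {a : M} {n : ℕ} :
    a ∈ s ^ n ↔ ∃ L : List M, L.length = n ∧ (∀ x ∈ L, x ∈ s) ∧ L.prod = a := by
  rw [Set.mem_pow]
  constructor
  · rintro ⟨f, rfl⟩
    exact ⟨List.ofFn fun i ↦ (f i : M), List.length_ofFn, by simp, rfl⟩
  · rintro ⟨L, rfl, hL, rfl⟩
    exact ⟨fun i ↦ ⟨L.get i, hL _ (L.get_mem i)⟩, congrArg List.prod (List.ofFn_get L)⟩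

lemma Set.univ_pi_pow_subset {ι : Type*} {M : ι → Type*} [∀ i, Monoid (M i)]
    (s : ∀ i, Set (M i)) (n : ℕ) : Set.univ.pi (fun i ↦ s i ^ n) ⊆ Set.univ.pi s ^ n := by
  induction n with
  | zero =>
    intro a ha
    simp only [pow_zero, Set.mem_univ_pi, Set.mem_one] at ha ⊢
    exact funext ha
  | succ n ih =>
    intro a ha
    simp only [pow_succ, Set.mem_univ_pi, Set.mem_mul] at ha
    choose x hx y hy hxy using ha
    rw [pow_succ]
    exact ⟨x, ih (Set.mem_univ_pi.2 hx), y, Set.mem_univ_pi.2 hy, funext hxy⟩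

section SwapRounds

variable {V : Type*} {G : SimpleGraph V}

variable (G) in
def swapRounds : Set (Perm V) := {σ | IsSwapRound G σ}

lemma one_mem_swapRounds : (1 : Perm V) ∈ swapRounds G :=
  ⟨mul_one 1, fun _ hv ↦ absurd rfl hv⟩

lemma swap_mem_swapRounds [DecidableEq V] {u v : V} (h : G.Adj u v) :
    swap u v ∈ swapRounds G := by
  refine ⟨swap_mul_self u v, fun w hw ↦ ?_⟩
  rcases eq_or_ne w u with rfl | hwu
  · simpa using h
  rcases eq_or_ne w v with rfl | hwv
  · simpa using h.symm
  · exact absurd (swap_apply_of_ne_of_ne hwu hwv) hw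

lemma rtS_eq_sInf (π : Perm V) : rtS G π = sInf {n | π ∈ swapRounds G ^ n} := by
  simp only [rtS, Set.mem_pow_iff_exists_list]
  rfl

lemma rtS_le_of_mem_pow {π : Perm V} {n : ℕ} (h : π ∈ swapRounds G ^ n) : rtS G π ≤ n := by
  rw [rtS_eq_sInf]
  exact Nat.sInf_le h

lemma mem_swapRounds_pow_rtS {π : Perm V} {n : ℕ} (h : π ∈ swapRounds G ^ n) :
    π ∈ swapRounds G ^ rtS G π := by
  rw [rtS_eq_sInf]
  exact Nat.sInf_mem (s := {n | π ∈ swapRounds G ^ n}) ⟨n, h⟩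

lemma exists_swap_mem_swapRounds_pow [DecidableEq V] {x y : V} (p : G.Walk x y) :
    ∃ n, swap x y ∈ swapRounds G ^ n := by
  induction p with
  | nil => exact ⟨0, by rw [swap_self, pow_zero]; exact Set.mem_one.2 rfl⟩
  | @cons x b y hxb p ih =>
    obtain ⟨n, hn⟩ := ih
    rcases eq_or_ne y x with rfl | hyx
    · exact ⟨0, by rw [swap_self, pow_zero]; exact Set.mem_one.2 rfl⟩
    rcases eq_or_ne y b with rfl | hyb
    · exact ⟨1, by simpa using swap_mem_swapRounds hxb⟩
    have hconj : swap x y = swap x b * swap b y * swap x b := by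
      simpa [swap_apply_of_ne_of_ne hyx hyb] using swap_apply_apply (swap x b) b y
    refine ⟨1 + n + 1, ?_⟩
    rw [hconj, pow_add, pow_add, pow_one]
    have hxb' := swap_mem_swapRounds hxb
    exact Set.mul_mem_mul (Set.mul_mem_mul hxb' hn) hxb'

lemma exists_mem_swapRounds_pow [Finite V] (hG : G.Connected) (π : Perm V) :
    ∃ n, π ∈ swapRounds G ^ n := by
  classical
  induction π using Perm.swap_induction_on with
  | one => exact ⟨0, by simp⟩
  | swap_mul f x y _ ih =>
    obtain ⟨m, hm⟩ := exists_swap_mem_swapRounds_pow (hG.preconnected x y).some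
    obtain ⟨n, hn⟩ := ih
    exact ⟨m + n, by rw [pow_add]; exact Set.mul_mem_mul hm hn⟩

lemma mem_swapRounds_pow_rtSworst [Finite V] (hG : G.Connected) (π : Perm V) :
    π ∈ swapRounds G ^ rtSworst G := by
  obtain ⟨n, hn⟩ := exists_mem_swapRounds_pow hG π
  exact Set.pow_subset_pow_right one_mem_swapRounds
    (le_ciSup (Set.finite_range _).bddAbove π) (mem_swapRounds_pow_rtS hn)

end SwapRounds

namespace Equiv.Perm

variable {A B : Type*}

def fiberwiseFst : (B → Perm A) →* Perm (A × B) where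
  toFun e :=
    { toFun x := (e x.2 x.1, x.2)
      invFun x := ((e x.2)⁻¹ x.1, x.2)
      left_inv x := by simp
      right_inv x := by simp }
  map_one' := rfl
  map_mul' _ _ := rfl

def fiberwiseSnd : (A → Perm B) →* Perm (A × B) where
  toFun e :=
    { toFun x := (x.1, e x.1 x.2)
      invFun x := (x.1, (e x.1)⁻¹ x.2)
      left_inv x := by simp
      right_inv x := by simp }
  map_one' := rfl
  map_mul' _ _ := rfl

lemma exists_fiberwiseFst_eq {ν : Perm (A × B)} (hν : ∀ x, (ν x).2 = x.2) :
    ∃ ρ, fiberwiseFst ρ = ν := by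
  have hν_symm (x : A × B) : (ν.symm x).2 = x.2 := by
    simpa using (hν (ν.symm x)).symm
  have hpair (x : A × B) : ((ν x).1, x.2) = ν x := Prod.ext rfl (hν x).symm
  have hpair_symm (x : A × B) : ((ν.symm x).1, x.2) = ν.symm x :=
    Prod.ext rfl (hν_symm x).symm
  refine ⟨fun b ↦ ⟨fun a ↦ (ν (a, b)).1, fun a ↦ (ν.symm (a, b)).1, fun a ↦ ?_, fun a ↦ ?_⟩, ?_⟩
  · change (ν.symm ((ν (a, b)).1, (a, b).2)).1 = a
    rw [hpair, symm_apply_apply]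
  · change (ν ((ν.symm (a, b)).1, (a, b).2)).1 = a
    rw [hpair_symm, apply_symm_apply]
  · ext x
    · rfl
    · exact (hν x).symm

lemma exists_fiberwiseFst_mul_fiberwiseSnd_eq [Finite B] {φ : Perm (A × B)}
    (hφ : ∀ a, Injective fun b ↦ (φ (a, b)).2) :
    ∃ ρ₃ ρ₂, fiberwiseFst ρ₃ * fiberwiseSnd ρ₂ = φ := by
  let ρ₂ (a : A) : Perm B := ofBijective _ (Finite.injective_iff_bijective.1 (hφ a))
  obtain ⟨ρ₃, hρ₃⟩ : ∃ ρ₃, fiberwiseFst ρ₃ = φ * (fiberwiseSnd ρ₂)⁻¹ := by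
    refine exists_fiberwiseFst_eq fun x ↦ ?_
    obtain ⟨y, rfl⟩ := (fiberwiseSnd ρ₂).surjective x
    rw [mul_apply, inv_def, symm_apply_apply]
    rfl
  exact ⟨ρ₃, ρ₂, by rw [hρ₃, inv_mul_cancel_right]⟩

section SwapRounds

variable {G₁ : SimpleGraph A} {G₂ : SimpleGraph B}

lemma fiberwiseFst_mem_swapRounds {e : B → Perm A} (he : ∀ b, e b ∈ swapRounds G₁) :
    fiberwiseFst e ∈ swapRounds (G₁ □ G₂) := by
  refine ⟨?_, fun x hx ↦ SimpleGraph.boxProd_adj.2 (Or.inl ⟨(he x.2).2 x.1 fun h ↦ ?_, rfl⟩)⟩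
  · rw [← map_mul, show e * e = 1 from funext fun b ↦ (he b).1, map_one]
  · exact hx (Prod.ext h rfl)

lemma fiberwiseSnd_mem_swapRounds {e : A → Perm B} (he : ∀ a, e a ∈ swapRounds G₂) :
    fiberwiseSnd e ∈ swapRounds (G₁ □ G₂) := by
  refine ⟨?_, fun x hx ↦ SimpleGraph.boxProd_adj.2 (Or.inr ⟨(he x.1).2 x.2 fun h ↦ ?_, rfl⟩)⟩
  · rw [← map_mul, show e * e = 1 from funext fun a ↦ (he a).1, map_one]
  · exact hx (Prod.ext rfl h)

lemma fiberwiseFst_mem_swapRounds_pow {e : B → Perm A} {n : ℕ}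
    (he : ∀ b, e b ∈ swapRounds G₁ ^ n) : fiberwiseFst e ∈ swapRounds (G₁ □ G₂) ^ n := by
  have h := Set.mem_image_of_mem fiberwiseFst
    (Set.univ_pi_pow_subset (fun _ ↦ swapRounds G₁) n (Set.mem_univ_pi.2 he))
  rw [Set.image_pow] at h
  refine Set.pow_subset_pow_left ?_ h
  rintro _ ⟨e, he, rfl⟩
  exact fiberwiseFst_mem_swapRounds (Set.mem_univ_pi.1 he)

lemma fiberwiseSnd_mem_swapRounds_pow {e : A → Perm B} {n : ℕ}
    (he : ∀ a, e a ∈ swapRounds G₂ ^ n) : fiberwiseSnd e ∈ swapRounds (G₁ □ G₂) ^ n := by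
  have h := Set.mem_image_of_mem fiberwiseSnd
    (Set.univ_pi_pow_subset (fun _ ↦ swapRounds G₂) n (Set.mem_univ_pi.2 he))
  rw [Set.image_pow] at h
  refine Set.pow_subset_pow_left ?_ h
  rintro _ ⟨e, he, rfl⟩
  exact fiberwiseSnd_mem_swapRounds (Set.mem_univ_pi.1 he)

end SwapRounds

end Equiv.Perm

section BipartiteEdgeColoring

variable {X B : Type*} {p q : X → B} {s : Finset X} {k : ℕ}

/-- Hall's condition holds in the `k`-regular bipartite multigraph on two copies of `B` with an
edge `p x — q x` for each `x ∈ s`, so it has a perfect matching. -/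
lemma exists_section_injective_comp [DecidableEq B] (hk : 0 < k)
    (hp : ∀ b, #{x ∈ s | p x = b} = k) (hq : ∀ b, #{x ∈ s | q x = b} = k) :
    ∃ f : B → X, (∀ b, f b ∈ s ∧ p (f b) = b) ∧ Injective (q ∘ f) := by
  let T (b : B) : Finset B := {x ∈ s | p x = b}.image q
  have hall (S : Finset B) : #S ≤ #(S.biUnion T) := by
    have hsub : {x ∈ s | p x ∈ S} ⊆ {x ∈ s | q x ∈ S.biUnion T} := by
      intro x hx
      simp only [mem_filter, mem_biUnion, mem_image, T] at hx ⊢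
      exact ⟨hx.1, p x, hx.2, x, ⟨hx.1, rfl⟩, rfl⟩
    have := card_le_card hsub
    rw [← sum_card_fiberwise_eq_card_filter, ← sum_card_fiberwise_eq_card_filter] at this
    simp only [hp, hq, sum_const, smul_eq_mul] at this
    exact Nat.le_of_mul_le_mul_right this hk
  obtain ⟨g, hg, hgT⟩ := (all_card_le_biUnion_card_iff_exists_injective T).1 hall
  choose f hf hqf using fun b ↦ mem_image.1 (hgT b)
  refine ⟨f, fun b ↦ mem_filter.1 (hf b), ?_⟩
  convert hg
  exact funext hqf

lemma card_filter_image_eq_one [DecidableEq X] [Fintype B] [DecidableEq B] {f : B → X}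
    {h : X → B} (hf : Bijective (h ∘ f)) (b : B) :
    #{x ∈ univ.image f | h x = b} = 1 := by
  obtain ⟨b₀, rfl⟩ := hf.2 b
  refine card_eq_one.2 ⟨f b₀, ?_⟩
  ext x
  simp only [mem_filter, mem_image, mem_univ, true_and, mem_singleton]
  constructor
  · rintro ⟨⟨b₁, rfl⟩, hb₁⟩
    rw [hf.1 hb₁]
  · rintro rfl
    exact ⟨⟨b₀, rfl⟩, rfl⟩

lemma card_filter_sdiff_image [DecidableEq X] [Fintype B] [DecidableEq B] {f : B → X}
    {h : X → B} (hfs : ∀ b, f b ∈ s) (hf : Bijective (h ∘ f)) (b : B) :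
    #{x ∈ s \ univ.image f | h x = b} = #{x ∈ s | h x = b} - 1 := by
  have hsub : {x ∈ univ.image f | h x = b} ⊆ {x ∈ s | h x = b} :=
    filter_subset_filter _ (image_subset_iff.2 fun b _ ↦ hfs b)
  have hsdiff : {x ∈ s \ univ.image f | h x = b} =
      {x ∈ s | h x = b} \ {x ∈ univ.image f | h x = b} := by
    ext
    simp only [mem_sdiff, mem_filter]
    tauto
  rw [hsdiff, card_sdiff_of_subset hsub, card_filter_image_eq_one hf]

lemma injOn_ite_mem_image [DecidableEq X] [Fintype B] {f : B → X} {h : X → B}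
    (hf : Injective (h ∘ f)) {c : X → ℕ} (hc : ∀ x ∈ s \ univ.image f, c x < k)
    (hinj : Set.InjOn (fun x ↦ (c x, h x)) ↑(s \ univ.image f)) :
    Set.InjOn (fun x ↦ (if x ∈ univ.image f then k else c x, h x)) ↑s := by
  intro x hx y hy hxy
  simp only [Prod.mk.injEq] at hxy
  obtain ⟨hcxy, hhxy⟩ := hxy
  by_cases hxf : x ∈ univ.image f <;> by_cases hyf : y ∈ univ.image f <;>
    simp only [hxf, hyf, if_true, if_false] at hcxy
  · obtain ⟨b, -, rfl⟩ := mem_image.1 hxf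
    obtain ⟨b', -, rfl⟩ := mem_image.1 hyf
    rw [hf hhxy]
  · exact absurd hcxy (hc y (mem_sdiff.2 ⟨hy, hyf⟩)).ne'
  · exact absurd hcxy (hc x (mem_sdiff.2 ⟨hx, hxf⟩)).ne
  · exact hinj (mem_sdiff.2 ⟨hx, hxf⟩) (mem_sdiff.2 ⟨hy, hyf⟩) (Prod.ext hcxy hhxy)

/-- König's edge colouring theorem for the multigraph of `exists_section_injective_comp`. -/
theorem exists_coloring_injOn [DecidableEq X] [Fintype B] [DecidableEq B]
    (hp : ∀ b, #{x ∈ s | p x = b} = k) (hq : ∀ b, #{x ∈ s | q x = b} = k) :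
    ∃ c : X → ℕ, (∀ x ∈ s, c x < k) ∧
      Set.InjOn (fun x ↦ (c x, p x)) s ∧ Set.InjOn (fun x ↦ (c x, q x)) s := by
  induction k generalizing s with
  | zero =>
    obtain rfl : s = ∅ := eq_empty_of_forall_notMem fun x hx ↦
      (filter_eq_empty_iff.1 (card_eq_zero.1 (hp (p x)))) hx rfl
    simp
  | succ k ih =>
    obtain ⟨f, hf, hqf⟩ := exists_section_injective_comp k.succ_pos hp hq
    have hpf : Bijective (p ∘ f) := by
      rw [show p ∘ f = id from funext fun b ↦ (hf b).2]
      exact bijective_id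
    have hfs (b : B) : f b ∈ s := (hf b).1
    obtain ⟨c, hck, hcp, hcq⟩ := ih (s := s \ univ.image f)
      (fun b ↦ by rw [card_filter_sdiff_image hfs hpf, hp]; rfl)
      (fun b ↦ by
        rw [card_filter_sdiff_image hfs (Finite.injective_iff_bijective.1 hqf), hq]; rfl)
    refine ⟨fun x ↦ if x ∈ univ.image f then k else c x, fun x hx ↦ ?_,
      injOn_ite_mem_image hpf.1 hck hcp, injOn_ite_mem_image hqf hck hcq⟩
    dsimp only
    split_ifs with hxf
    · exact k.lt_succ_self
    · exact (hck x (mem_sdiff.2 ⟨hx, hxf⟩)).trans k.lt_succ_self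

end BipartiteEdgeColoring

lemma card_filter_snd_eq {A B : Type*} [Fintype A] [Fintype B] [DecidableEq B] (b : B) :
    #{x : A × B | x.2 = b} = Fintype.card A := by
  rw [show ({x : A × B | x.2 = b} : Finset (A × B)) = univ ×ˢ {b} by
      ext ⟨a, b'⟩; simp [eq_comm],
    card_product, card_singleton, mul_one, card_univ]

namespace Equiv.Perm

variable {A B : Type*}

theorem exists_fiberwise_decomposition [Finite A] [Finite B] (π : Perm (A × B)) :
    ∃ ρ₁ ρ₂ ρ₃, fiberwiseFst ρ₃ * fiberwiseSnd ρ₂ * fiberwiseFst ρ₁ = π := by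
  classical
  have := Fintype.ofFinite A
  have := Fintype.ofFinite B
  obtain ⟨c, hck, hcp, hcq⟩ := exists_coloring_injOn (s := univ) (p := Prod.snd)
    (q := fun x ↦ (π x).2) card_filter_snd_eq fun b ↦ by
      rw [← card_filter_snd_eq b]
      exact card_equiv π fun x ↦ by simp
  let col (x : A × B) : A := (Fintype.equivFin A).symm ⟨c x, hck x (mem_univ x)⟩
  have hcol {x y : A × B} (h : col x = col y) : c x = c y := by
    simpa [col] using h
  let ρ₁ (b : B) : Perm A := ofBijective (fun a ↦ col (a, b)) <|
    Finite.injective_iff_bijective.1 fun a a' h ↦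
      congrArg Prod.fst (hcp (by simp) (by simp) (Prod.ext (hcol h) rfl))
  obtain ⟨ρ₃, ρ₂, h⟩ := exists_fiberwiseFst_mul_fiberwiseSnd_eq
    (φ := π * (fiberwiseFst ρ₁)⁻¹) fun a b b' hbb' ↦ by
      have hcol_inv (b : B) : col ((fiberwiseFst ρ₁)⁻¹ (a, b)) = a :=
        congrArg Prod.fst ((fiberwiseFst ρ₁).apply_symm_apply (a, b))
      have h := hcq (by simp) (by simp)
        (Prod.ext (hcol ((hcol_inv b).trans (hcol_inv b').symm)) hbb')
      simpa using congrArg (fiberwiseFst ρ₁) h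
  exact ⟨ρ₁, ρ₂, ρ₃, by rw [h, inv_mul_cancel_right]⟩

end Equiv.Perm

/-- The worst-case swap routing time of a Cartesian (box) product satisfies
`rt_S(G₁ □ G₂) ≤ 2·rt_S(G₁) + rt_S(G₂)`. -/
theorem rtSworst_boxProd_le {V₁ V₂ : Type*} [Fintype V₁] [Fintype V₂]
    (G₁ : SimpleGraph V₁) (G₂ : SimpleGraph V₂)
    (h₁ : G₁.Connected) (h₂ : G₂.Connected) :
    rtSworst (G₁ □ G₂) ≤ 2 * rtSworst G₁ + rtSworst G₂ := by
  refine ciSup_le fun π ↦ ?_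
  obtain ⟨ρ₁, ρ₂, ρ₃, rfl⟩ := Perm.exists_fiberwise_decomposition π
  apply rtS_le_of_mem_pow
  rw [two_mul, add_right_comm, pow_add, pow_add]
  exact Set.mul_mem_mul
    (Set.mul_mem_mul
      (Perm.fiberwiseFst_mem_swapRounds_pow fun b ↦ mem_swapRounds_pow_rtSworst h₁ (ρ₃ b))
      (Perm.fiberwiseSnd_mem_swapRounds_pow fun a ↦ mem_swapRounds_pow_rtSworst h₂ (ρ₂ a)))
    (Perm.fiberwiseFst_mem_swapRounds_pow fun b ↦ mem_swapRounds_pow_rtSworst h₁ (ρ₁ b))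
end
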